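/- For every K ≥ 1 there exist C(K) > 0 and s₀(K) ≥ 1 such that for all s ≥ s₀(K), all y with |y| ≤ 2K·s^{1/4}, and all q ∈ ℂ with |q| ≤ 1: |B(q,y,s)| ≤ C(K)·|q|². Moreover there exist C > 0 and s₁ ≥ 1 such that for all s ≥ s₁, all y with |y| ≥ s^{1/4} and all q ∈ ℂ with |q| ≤ 1: |B(q,y,s)| ≤ C·|q|^{p̄}, where p̄ = min(p,2). -/

import Mathlib

open Complex

/-- `x^w := exp(w · log x)` for a positive real base `x` and complex exponent `w`. -/
noncomputable def rcpow (x : ℝ) (w : ℂ) : ℂ := Complex.exp (w * Real.log x)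

/-- The approximate profile
`φ(y,s) = κ^{−iδ}·(p−1 + b y²/√s)^{−(1+iδ)/(p−1)} + (1+iδ)·a/√s`. -/
noncomputable def phiA (p δ κ b a : ℝ) (y s : ℝ) : ℂ :=
  rcpow κ (-(Complex.I * δ)) *
    rcpow (p - 1 + b * y ^ 2 / Real.sqrt s) (-(1 + Complex.I * δ) / (p - 1)) +
  (1 + Complex.I * δ) * ((a / Real.sqrt s : ℝ) : ℂ)

/-- The quadratic term
`B(q,y,s) = (1+iδ)(|φ+q|^{p−1}(φ+q) − |φ|^{p−1}φ − |φ|^{p−1}q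
  − ((p−1)/2)|φ|^{p−3}φ(φ·conj q + conj φ·q))`. -/
noncomputable def Bq (p δ κ b a : ℝ) (q : ℂ) (y s : ℝ) : ℂ :=
  (1 + Complex.I * δ) *
    (((‖phiA p δ κ b a y s + q‖ ^ (p - 1) : ℝ) : ℂ) * (phiA p δ κ b a y s + q)
      - ((‖phiA p δ κ b a y s‖ ^ (p - 1) : ℝ) : ℂ) * phiA p δ κ b a y s
      - ((‖phiA p δ κ b a y s‖ ^ (p - 1) : ℝ) : ℂ) * q
      - (((p - 1) / 2 : ℝ) : ℂ) * ((‖phiA p δ κ b a y s‖ ^ (p - 3) : ℝ) : ℂ) *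
          phiA p δ κ b a y s *
          (phiA p δ κ b a y s * (starRingEnd ℂ) q + (starRingEnd ℂ) (phiA p δ κ b a y s) * q))


/-!
`B(q)` is `(1 + iδ)` times the second-order Taylor remainder of `F(u) = |u|^{p-1} u` at `φ`.
On a segment `φ + tq` avoiding `0` the second derivative of `t ↦ F(φ + tq)` is bounded by
`(p-1)(|p-3|+3) |φ + tq|^{p-2} |q|^2`, and this bounds the remainder.

In the inner region `φ` stays, for large `s`, in a fixed annulus `m ≤ |φ| ≤ M`: its modulus is
`(p-1+by²/√s)^{-1/(p-1)} + O(s^{-1/2})` and `y²/√s ≤ 4K²`. This gives `C|q|²` for `|q| ≤ m/2`,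
and for `|q| > m/2` the crude bound `|B| ≲ 1` suffices.
In the outer region only `|φ| ≤ M` is available. If `|φ| ≤ 2|q|` the crude bound is `O(|q|^p)`;
otherwise `|φ + tq| ≥ |q|` on the segment, so the Taylor bound is `|q|^{p-2}|q|^2 = |q|^p` when
`p < 2`, and `(M+1)^{p-2}|q|^2` when `p ≥ 2`.
-/

open Set Real Filter ComplexConjugate
open scoped RealInnerProductSpace

theorem norm_sub_sub_le_of_hasDerivAt_two {E : Type*} [NormedAddCommGroup E] [NormedSpace ℝ E]
    {f f' f'' : ℝ → E} {C : ℝ} (hf : ∀ t ∈ Icc (0 : ℝ) 1, HasDerivAt f (f' t) t)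
    (hf' : ∀ t ∈ Icc (0 : ℝ) 1, HasDerivAt f' (f'' t) t) (hC : ∀ t ∈ Icc (0 : ℝ) 1, ‖f'' t‖ ≤ C) :
    ‖f 1 - f 0 - f' 0‖ ≤ C := by
  -- `f + (1 - t) f'` has derivative `(1 - t) f''`: Taylor's formula without integrals
  have hu : ∀ t ∈ Icc (0 : ℝ) 1, HasDerivWithinAt (fun t ↦ f t + (1 - t) • f' t)
      ((1 - t) • f'' t) (Icc 0 1) t := by
    intro t ht
    have := (hf t ht).add (((hasDerivAt_id t).const_sub 1).smul (hf' t ht))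
    exact (this.congr_deriv (by simp only [id]; module)).hasDerivWithinAt
  have hbound : ∀ t ∈ Ico (0 : ℝ) 1, ‖(1 - t) • f'' t‖ ≤ C := fun t ht ↦ by
    rw [norm_smul, Real.norm_of_nonneg (by linarith [ht.2])]
    exact (mul_le_of_le_one_left (norm_nonneg _) (by linarith [ht.1])).trans
      (hC t (Ico_subset_Icc_self ht))
  simpa [sub_add_eq_sub_sub] using
    norm_image_sub_le_of_norm_deriv_le_segment' hu hbound 1 (right_mem_Icc.2 zero_le_one)

theorem HasDerivAt.norm_rpow {F : Type*} [NormedAddCommGroup F] [InnerProductSpace ℝ F]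
    {f : ℝ → F} {f' : F} {x : ℝ} (hf : HasDerivAt f f' x) (hx : f x ≠ 0) (e : ℝ) :
    HasDerivAt (fun t ↦ ‖f t‖ ^ e) (e * ‖f x‖ ^ (e - 2) * ⟪f x, f'⟫) x := by
  have hsq : ∀ v : F, ∀ e : ℝ, ‖v‖ ^ e = (‖v‖ ^ 2) ^ (e / 2) := fun v e ↦ by
    rw [← Real.rpow_natCast, ← Real.rpow_mul (norm_nonneg v)]
    ring_nf
  have := hf.norm_sq.rpow_const (p := e / 2) (Or.inl (by positivity))
  simp only [← hsq] at this
  convert this using 1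
  rw [hsq _ (e - 2), show (e - 2) / 2 = e / 2 - 1 by ring]
  ring

theorem hasDerivAt_add_smul {E : Type*} [NormedAddCommGroup E] [NormedSpace ℝ E] (z q : E)
    (t : ℝ) : HasDerivAt (fun t : ℝ ↦ z + t • q) q t := by
  simpa using ((hasDerivAt_id t).smul_const q).const_add z

theorem abs_norm_add_smul_sub_norm_le {E : Type*} [SeminormedAddCommGroup E] [NormedSpace ℝ E]
    (z q : E) {t : ℝ} (ht : t ∈ Icc (0 : ℝ) 1) : |‖z + t • q‖ - ‖z‖| ≤ ‖q‖ := by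
  refine (abs_norm_sub_norm_le _ _).trans ?_
  rw [add_sub_cancel_left, norm_smul, Real.norm_of_nonneg ht.1]
  exact mul_le_of_le_one_left (norm_nonneg q) ht.2

noncomputable def nonlin (p : ℝ) (z : ℂ) : ℂ := ((‖z‖ ^ (p - 1) : ℝ) : ℂ) * z

noncomputable def nonlinDeriv (p : ℝ) (z q : ℂ) : ℂ :=
  ((‖z‖ ^ (p - 1) : ℝ) : ℂ) * q +
    (((p - 1) / 2 : ℝ) : ℂ) * ((‖z‖ ^ (p - 3) : ℝ) : ℂ) * z * (z * conj q + conj z * q)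

noncomputable def nonlinRem (p : ℝ) (z q : ℂ) : ℂ :=
  nonlin p (z + q) - nonlin p z - nonlinDeriv p z q

section Nonlin

variable {p : ℝ}

theorem nonlin_eq_smul (z : ℂ) : nonlin p z = ‖z‖ ^ (p - 1) • z :=
  (Complex.real_smul ..).symm

theorem nonlinDeriv_eq (z q : ℂ) :
    nonlinDeriv p z q = ‖z‖ ^ (p - 1) • q + ((p - 1) * ‖z‖ ^ (p - 3) * ⟪z, q⟫) • z := by
  simp only [nonlinDeriv, Complex.real_smul, Complex.inner]
  apply Complex.ext <;> simp <;> ring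

theorem hasDerivAt_nonlin_line {z q : ℂ} {t : ℝ} (ht : z + t • q ≠ 0) :
    HasDerivAt (fun t : ℝ ↦ nonlin p (z + t • q)) (nonlinDeriv p (z + t • q) q) t := by
  simp only [nonlin_eq_smul, nonlinDeriv_eq]
  have hline := hasDerivAt_add_smul z q t
  refine ((hline.norm_rpow ht (p - 1)).smul hline).congr_deriv ?_
  rw [show p - 1 - 2 = p - 3 by ring]

theorem exists_hasDerivAt_nonlinDeriv_line (hp : 1 ≤ p) {z q : ℂ} {t : ℝ} (ht : z + t • q ≠ 0) :
    ∃ f'' : ℂ, HasDerivAt (fun t : ℝ ↦ nonlinDeriv p (z + t • q) q) f'' t ∧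
      ‖f''‖ ≤ (p - 1) * (|p - 3| + 3) * ‖z + t • q‖ ^ (p - 2) * ‖q‖ ^ 2 := by
  have hline := hasDerivAt_add_smul z q t
  have hder := ((hline.norm_rpow ht (p - 1)).smul_const q).add
    ((((hline.norm_rpow ht (p - 3)).const_mul (p - 1)).mul
      (hline.inner ℝ (hasDerivAt_const t q))).smul hline)
  simp only [Pi.mul_apply] at hder
  simp only [nonlinDeriv_eq]
  set w := z + t • q
  set S := ‖w‖
  set I := ⟪w, q⟫
  have hS : 0 < S := norm_pos_iff.2 ht
  have hI : |I| ≤ S * ‖q‖ := abs_real_inner_le_norm w q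
  -- all powers of `S` are written through `A = S ^ (p - 5)`, so that the estimate is polynomial
  set A := S ^ (p - 5)
  have hpow : ∀ n : ℕ, S ^ (p - 5 + n) = A * S ^ n := fun n ↦ Real.rpow_add_natCast hS.ne' _ n
  have h3 : S ^ (p - 3) = A * S ^ 2 := by rw [← hpow]; ring_nf
  have h2 : S ^ (p - 2) = A * S ^ 3 := by rw [← hpow]; ring_nf
  refine ⟨((p - 1) * A) • ((2 * S ^ 2 * I) • q + ((p - 3) * (I * I) + S ^ 2 * ‖q‖ ^ 2) • w),
    hder.congr_deriv ?_, ?_⟩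
  · simp only [show p - 1 - 2 = p - 3 by ring, show p - 3 - 2 = p - 5 by ring, h3,
      inner_zero_right, zero_add, real_inner_self_eq_norm_sq]
    module
  have hI2 : I * I ≤ S ^ 2 * ‖q‖ ^ 2 := by
    nlinarith [mul_self_le_mul_self (abs_nonneg I) hI, abs_mul_abs_self I]
  have hII : |(p - 3) * (I * I) + S ^ 2 * ‖q‖ ^ 2| ≤ (|p - 3| + 1) * (S ^ 2 * ‖q‖ ^ 2) := by
    refine (abs_add_le _ _).trans ?_
    rw [abs_mul, abs_mul_self, abs_of_nonneg (by positivity : (0 : ℝ) ≤ S ^ 2 * ‖q‖ ^ 2)]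
    nlinarith [mul_le_mul_of_nonneg_left hI2 (abs_nonneg (p - 3))]
  have hvec : ‖(2 * S ^ 2 * I) • q + ((p - 3) * (I * I) + S ^ 2 * ‖q‖ ^ 2) • w‖
      ≤ (|p - 3| + 3) * S ^ 3 * ‖q‖ ^ 2 := by
    refine (norm_add_le _ _).trans ?_
    rw [norm_smul, norm_smul, Real.norm_eq_abs, Real.norm_eq_abs, abs_mul,
      abs_of_pos (by positivity : 0 < 2 * S ^ 2)]
    nlinarith [mul_le_mul_of_nonneg_left hI (by positivity : 0 ≤ 2 * S ^ 2 * ‖q‖),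
      mul_le_mul_of_nonneg_right hII hS.le]
  rw [norm_smul, Real.norm_of_nonneg (mul_nonneg (by linarith) (by positivity)), h2]
  calc (p - 1) * A * ‖_‖ ≤ (p - 1) * A * ((|p - 3| + 3) * S ^ 3 * ‖q‖ ^ 2) := by
        gcongr
    _ = (p - 1) * (|p - 3| + 3) * (A * S ^ 3) * ‖q‖ ^ 2 := by ring

theorem norm_nonlinRem_le_of_segment (hp : 1 ≤ p) {z q : ℂ} {D : ℝ}
    (hne : ∀ t ∈ Icc (0 : ℝ) 1, z + t • q ≠ 0)
    (hD : ∀ t ∈ Icc (0 : ℝ) 1, ‖z + t • q‖ ^ (p - 2) ≤ D) :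
    ‖nonlinRem p z q‖ ≤ (p - 1) * (|p - 3| + 3) * D * ‖q‖ ^ 2 := by
  choose! f'' hf'' hbound using
    fun t (ht : t ∈ Icc (0 : ℝ) 1) ↦ exists_hasDerivAt_nonlinDeriv_line hp (hne t ht)
  have hC : 0 ≤ (p - 1) * (|p - 3| + 3) := mul_nonneg (by linarith) (by positivity)
  simpa [nonlinRem] using norm_sub_sub_le_of_hasDerivAt_two
    (fun t ht ↦ hasDerivAt_nonlin_line (p := p) (hne t ht)) hf''
    fun t ht ↦ (hbound t ht).trans <|
      mul_le_mul_of_nonneg_right (mul_le_mul_of_nonneg_left (hD t ht) hC) (sq_nonneg _)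

theorem norm_nonlin (hp : p ≠ 0) (z : ℂ) : ‖nonlin p z‖ = ‖z‖ ^ p := by
  rw [nonlin_eq_smul, norm_smul, Real.norm_of_nonneg (by positivity),
    ← Real.rpow_add_one' (norm_nonneg z) (by simpa), sub_add_cancel]

theorem norm_nonlinDeriv_le (hp : 1 ≤ p) (z q : ℂ) :
    ‖nonlinDeriv p z q‖ ≤ p * ‖z‖ ^ (p - 1) * ‖q‖ := by
  rcases eq_or_ne z 0 with rfl | hz
  · simp only [nonlinDeriv, norm_zero, mul_zero, zero_mul, add_zero, norm_mul, Complex.norm_real,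
      Real.norm_eq_abs]
    rw [abs_of_nonneg (by positivity)]
    nlinarith [mul_nonneg (Real.rpow_nonneg le_rfl (p - 1)) (norm_nonneg q)]
  have hS : 0 < ‖z‖ := norm_pos_iff.2 hz
  have hpow : ‖z‖ ^ (p - 1) = ‖z‖ ^ (p - 3) * ‖z‖ ^ 2 := by
    rw [← Real.rpow_add_natCast hS.ne']; ring_nf
  have hp1 : 0 ≤ (p - 1) * ‖z‖ ^ (p - 3) := mul_nonneg (by linarith) (by positivity)
  rw [nonlinDeriv_eq]
  calc _ ≤ ‖z‖ ^ (p - 1) * ‖q‖ + (p - 1) * ‖z‖ ^ (p - 3) * |⟪z, q⟫| * ‖z‖ := by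
        refine (norm_add_le _ _).trans_eq ?_
        rw [norm_smul, norm_smul, Real.norm_of_nonneg (by positivity), Real.norm_eq_abs, abs_mul,
          abs_of_nonneg hp1]
    _ ≤ ‖z‖ ^ (p - 1) * ‖q‖ + (p - 1) * ‖z‖ ^ (p - 3) * (‖z‖ * ‖q‖) * ‖z‖ := by
        gcongr
        exact abs_real_inner_le_norm z q
    _ = p * ‖z‖ ^ (p - 1) * ‖q‖ := by rw [hpow]; ring

theorem norm_nonlinRem_le_of_norm_le (hp : 1 < p) {z q : ℂ} {r : ℝ} (hz : ‖z‖ ≤ r)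
    (hq : ‖q‖ ≤ r) : ‖nonlinRem p z q‖ ≤ (2 ^ p + 1 + p) * r ^ p := by
  have hr : 0 ≤ r := (norm_nonneg q).trans hq
  have hzq : ‖z + q‖ ≤ 2 * r := (norm_add_le z q).trans (by linarith)
  calc ‖nonlinRem p z q‖ ≤ ‖nonlin p (z + q)‖ + ‖nonlin p z‖ + ‖nonlinDeriv p z q‖ :=
        (norm_sub_le _ _).trans (by gcongr; exact norm_sub_le _ _)
    _ ≤ (2 * r) ^ p + r ^ p + p * r ^ (p - 1) * r := by
        rw [norm_nonlin (by positivity), norm_nonlin (by positivity)]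
        gcongr
        · exact (norm_nonlinDeriv_le hp.le z q).trans (by gcongr)
    _ = (2 ^ p + 1 + p) * r ^ p := by
        rw [Real.mul_rpow zero_le_two hr, mul_assoc, ← Real.rpow_add_one' hr (by linarith),
          sub_add_cancel]
        ring

theorem exists_norm_nonlinRem_le_sq (hp : 1 < p) {m M : ℝ} (hm : 0 < m) (hM : 0 ≤ M) :
    ∃ C > 0, ∀ z q : ℂ, m ≤ ‖z‖ → ‖z‖ ≤ M → ‖q‖ ≤ 1 → ‖nonlinRem p z q‖ ≤ C * ‖q‖ ^ 2 := by
  set Cp := (p - 1) * (|p - 3| + 3)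
  set D := max ((m / 2) ^ (p - 2)) ((M + 1) ^ (p - 2))
  set E := (2 ^ p + 1 + p) * (M + 1) ^ p
  have hCp : 0 < Cp := mul_pos (by linarith) (by positivity)
  refine ⟨Cp * D + E * (2 / m) ^ 2, by positivity, fun z q hmz hzM hq ↦ ?_⟩
  rcases le_or_gt ‖q‖ (m / 2) with hqm | hqm
  · have hseg : ∀ t ∈ Icc (0 : ℝ) 1, m / 2 ≤ ‖z + t • q‖ ∧ ‖z + t • q‖ ≤ M + 1 := fun t ht ↦ by
      have := abs_le.1 (abs_norm_add_smul_sub_norm_le z q ht)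
      constructor <;> linarith
    have hD : ∀ t ∈ Icc (0 : ℝ) 1, ‖z + t • q‖ ^ (p - 2) ≤ D := fun t ht ↦ by
      rcases le_total 2 p with h2 | h2
      · exact (Real.rpow_le_rpow (by positivity) (hseg t ht).2 (by linarith)).trans
          (le_max_right _ _)
      · exact (Real.rpow_le_rpow_of_nonpos (by positivity) (hseg t ht).1 (by linarith)).trans
          (le_max_left _ _)
    calc ‖nonlinRem p z q‖ ≤ Cp * D * ‖q‖ ^ 2 := norm_nonlinRem_le_of_segment hp.le
          (fun t ht ↦ norm_pos_iff.1 (by linarith [hseg t ht])) hD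
      _ ≤ (Cp * D + E * (2 / m) ^ 2) * ‖q‖ ^ 2 := by
        gcongr
        exact le_add_of_nonneg_right (by positivity)
  · have hq2 : 1 ≤ (2 / m) ^ 2 * ‖q‖ ^ 2 := by
      rw [← mul_pow]
      exact one_le_pow₀ (by rw [div_mul_eq_mul_div, le_div_iff₀ hm]; linarith)
    calc ‖nonlinRem p z q‖ ≤ E := norm_nonlinRem_le_of_norm_le hp (by linarith) (by linarith)
      _ ≤ E * ((2 / m) ^ 2 * ‖q‖ ^ 2) := le_mul_of_one_le_right (by positivity) hq2
      _ ≤ (Cp * D + E * (2 / m) ^ 2) * ‖q‖ ^ 2 := by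
        rw [add_mul, ← mul_assoc]; exact le_add_of_nonneg_left (by positivity)

theorem exists_norm_nonlinRem_le_rpow_min (hp : 1 < p) {M : ℝ} (hM : 0 ≤ M) :
    ∃ C > 0, ∀ z q : ℂ, ‖z‖ ≤ M → ‖q‖ ≤ 1 → ‖nonlinRem p z q‖ ≤ C * ‖q‖ ^ min p 2 := by
  set Cp := (p - 1) * (|p - 3| + 3)
  set E := (2 ^ p + 1 + p) * 2 ^ p
  have hCp : 0 < Cp := mul_pos (by linarith) (by positivity)
  have hE : 0 < E := by positivity
  have hB : 0 ≤ Cp * (M + 1) ^ (p - 2) := by positivity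
  refine ⟨E + Cp * (1 + (M + 1) ^ (p - 2)), by positivity, fun z q hzM hq ↦ ?_⟩
  rcases eq_or_ne q 0 with rfl | hq0
  · simp [nonlinRem, nonlinDeriv, Real.zero_rpow (lt_min (by linarith : (0 : ℝ) < p) two_pos).ne']
  have hq' : 0 < ‖q‖ := norm_pos_iff.2 hq0
  have hX : 0 ≤ ‖q‖ ^ min p 2 := by positivity
  rcases le_or_gt ‖z‖ (2 * ‖q‖) with hzq | hzq
  · have hqp : ‖q‖ ^ p ≤ ‖q‖ ^ min p 2 :=
      Real.rpow_le_rpow_of_exponent_ge hq' hq (min_le_left _ _)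
    calc ‖nonlinRem p z q‖ ≤ (2 ^ p + 1 + p) * (2 * ‖q‖) ^ p :=
          norm_nonlinRem_le_of_norm_le hp hzq (by linarith)
      _ = E * ‖q‖ ^ p := by rw [Real.mul_rpow zero_le_two hq'.le]; ring
      _ ≤ E * ‖q‖ ^ min p 2 := by gcongr
      _ ≤ (E + Cp * (1 + (M + 1) ^ (p - 2))) * ‖q‖ ^ min p 2 := by nlinarith
  have hseg : ∀ t ∈ Icc (0 : ℝ) 1, ‖q‖ ≤ ‖z + t • q‖ ∧ ‖z + t • q‖ ≤ M + 1 := fun t ht ↦ by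
    have := abs_le.1 (abs_norm_add_smul_sub_norm_le z q ht)
    constructor <;> linarith
  have hne : ∀ t ∈ Icc (0 : ℝ) 1, z + t • q ≠ 0 := fun t ht ↦
    norm_pos_iff.1 (hq'.trans_le (hseg t ht).1)
  rcases le_total 2 p with h2 | h2
  · calc ‖nonlinRem p z q‖ ≤ Cp * (M + 1) ^ (p - 2) * ‖q‖ ^ 2 :=
          norm_nonlinRem_le_of_segment hp.le hne fun t ht ↦
            Real.rpow_le_rpow (norm_nonneg _) (hseg t ht).2 (by linarith)
      _ = Cp * (M + 1) ^ (p - 2) * ‖q‖ ^ min p 2 := by rw [min_eq_right h2, Real.rpow_two]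
      _ ≤ (E + Cp * (1 + (M + 1) ^ (p - 2))) * ‖q‖ ^ min p 2 := by nlinarith
  · calc ‖nonlinRem p z q‖ ≤ Cp * ‖q‖ ^ (p - 2) * ‖q‖ ^ 2 :=
          norm_nonlinRem_le_of_segment hp.le hne fun t ht ↦
            Real.rpow_le_rpow_of_nonpos hq' (hseg t ht).1 (by linarith)
      _ = Cp * ‖q‖ ^ min p 2 := by
        rw [min_eq_left h2, mul_assoc, ← Real.rpow_add_natCast hq'.ne']; norm_num
      _ ≤ (E + Cp * (1 + (M + 1) ^ (p - 2))) * ‖q‖ ^ min p 2 := by nlinarith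

end Nonlin

theorem norm_rcpow {x : ℝ} (hx : 0 < x) (w : ℂ) : ‖rcpow x w‖ = x ^ w.re := by
  rw [rcpow, Complex.norm_exp, Real.rpow_def_of_pos hx, mul_comm]
  simp

theorem norm_rcpow_neg_I_mul (x δ : ℝ) : ‖rcpow x (-(I * δ))‖ = 1 := by
  simp [rcpow, Complex.norm_exp]

section Profile

variable {p δ κ b a y s : ℝ}

theorem abs_norm_phiA_sub_le (hp : 1 < p) (hb : 0 ≤ b) (hs : 0 < s) :
    |‖phiA p δ κ b a y s‖ - (p - 1 + b * y ^ 2 / √s) ^ (-1 / (p - 1))|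
      ≤ ‖1 + I * δ‖ * |a| / √s := by
  have hX : 0 < p - 1 + b * y ^ 2 / √s := add_pos_of_pos_of_nonneg (by linarith) (by positivity)
  have hmain : ‖rcpow κ (-(I * δ)) * rcpow (p - 1 + b * y ^ 2 / √s) (-(1 + I * δ) / (p - 1))‖
      = (p - 1 + b * y ^ 2 / √s) ^ (-1 / (p - 1)) := by
    rw [norm_mul, norm_rcpow_neg_I_mul, one_mul, norm_rcpow hX,
      show (p : ℂ) - 1 = ((p - 1 : ℝ) : ℂ) by push_cast; ring, Complex.div_ofReal_re]
    simp
  rw [← hmain]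
  refine (abs_norm_sub_norm_le _ _).trans_eq ?_
  rw [phiA, add_sub_cancel_left, norm_mul, Complex.norm_real, Real.norm_eq_abs, abs_div,
    abs_of_pos (Real.sqrt_pos.2 hs), mul_div_assoc]

theorem norm_phiA_le (hp : 1 < p) (hb : 0 ≤ b) (hs : 1 ≤ s) :
    ‖phiA p δ κ b a y s‖ ≤ (p - 1) ^ (-1 / (p - 1)) + ‖1 + I * δ‖ * |a| := by
  have h := abs_le.1 (abs_norm_phiA_sub_le (δ := δ) (κ := κ) (a := a) (y := y) hp hb
    (by linarith))
  have hmain : (p - 1 + b * y ^ 2 / √s) ^ (-1 / (p - 1)) ≤ (p - 1) ^ (-1 / (p - 1)) :=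
    Real.rpow_le_rpow_of_nonpos (by linarith) (le_add_of_nonneg_right (by positivity))
      (div_nonpos_of_nonpos_of_nonneg (by norm_num) (by linarith))
  have hcorr : ‖1 + I * δ‖ * |a| / √s ≤ ‖1 + I * δ‖ * |a| :=
    div_le_self (by positivity) (Real.one_le_sqrt.2 hs)
  linarith

theorem eventually_norm_phiA_ge (hp : 1 < p) (hb : 0 ≤ b) (K : ℝ) :
    ∃ m > 0, ∀ᶠ s in atTop, ∀ y : ℝ, |y| ≤ 2 * K * s ^ ((1 : ℝ) / 4) →
      m ≤ ‖phiA p δ κ b a y s‖ := by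
  set m₀ := (p - 1 + 4 * K ^ 2 * b) ^ (-1 / (p - 1))
  have hm₀ : 0 < m₀ :=
    Real.rpow_pos_of_pos (add_pos_of_pos_of_nonneg (by linarith) (by positivity)) _
  refine ⟨m₀ / 2, by positivity, ?_⟩
  have hcorr : ∀ᶠ s in atTop, ‖1 + I * δ‖ * |a| / √s ≤ m₀ / 2 :=
    ((tendsto_const_nhds (x := ‖1 + I * δ‖ * |a|)).div_atTop Real.tendsto_sqrt_atTop).eventually
      (ge_mem_nhds (half_pos hm₀))
  filter_upwards [hcorr, eventually_gt_atTop 0] with s hcorr hs y hy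
  have hy2 : y ^ 2 ≤ 4 * K ^ 2 * √s :=
    calc y ^ 2 = |y| ^ 2 := (sq_abs y).symm
      _ ≤ (2 * K * s ^ ((1 : ℝ) / 4)) ^ 2 := pow_le_pow_left₀ (abs_nonneg y) hy 2
      _ = 4 * K ^ 2 * √s := by
        rw [mul_pow, ← Real.rpow_natCast (s ^ _), ← Real.rpow_mul hs.le, Real.sqrt_eq_rpow]
        ring_nf
  have hX : p - 1 + b * y ^ 2 / √s ≤ p - 1 + 4 * K ^ 2 * b := by
    rw [add_le_add_iff_left, div_le_iff₀ (Real.sqrt_pos.2 hs)]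
    nlinarith
  have hmain : m₀ ≤ (p - 1 + b * y ^ 2 / √s) ^ (-1 / (p - 1)) :=
    Real.rpow_le_rpow_of_nonpos (add_pos_of_pos_of_nonneg (by linarith) (by positivity)) hX
      (div_nonpos_of_nonpos_of_nonneg (by norm_num) (by linarith))
  have h := abs_le.1 (abs_norm_phiA_sub_le (δ := δ) (κ := κ) (a := a) (y := y) hp hb hs)
  linarith

end Profile

theorem Bq_eq_mul_nonlinRem (p δ κ b a : ℝ) (q : ℂ) (y s : ℝ) :
    Bq p δ κ b a q y s = (1 + I * δ) * nonlinRem p (phiA p δ κ b a y s) q := by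
  simp only [Bq, nonlinRem, nonlin, nonlinDeriv]
  ring

theorem stmt8_general (p δ κ b a : ℝ) (hp : 1 < p)
    (hb : b = (p - 1) ^ 2 / (8 * Real.sqrt (p * (p + 1)))) :
    (∀ K : ℝ, 1 ≤ K → ∃ C : ℝ, 0 < C ∧ ∃ s₀ : ℝ, 1 ≤ s₀ ∧
      ∀ s : ℝ, s₀ ≤ s → ∀ y : ℝ, |y| ≤ 2 * K * s ^ ((1 : ℝ) / 4) →
        ∀ q : ℂ, ‖q‖ ≤ 1 →
          ‖Bq p δ κ b a q y s‖ ≤ C * ‖q‖ ^ 2) ∧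
    (∃ C : ℝ, 0 < C ∧ ∃ s₁ : ℝ, 1 ≤ s₁ ∧
      ∀ s : ℝ, s₁ ≤ s → ∀ y : ℝ, s ^ ((1 : ℝ) / 4) ≤ |y| →
        ∀ q : ℂ, ‖q‖ ≤ 1 →
          ‖Bq p δ κ b a q y s‖ ≤ C * ‖q‖ ^ (min p 2)) := by
  have hb0 : 0 ≤ b := hb ▸ by positivity
  set M := (p - 1) ^ (-1 / (p - 1)) + ‖1 + I * δ‖ * |a|
  have hM : 0 ≤ M := by positivity
  have hφ : ∀ s, 1 ≤ s → ∀ y, ‖phiA p δ κ b a y s‖ ≤ M := fun s hs y ↦ norm_phiA_le hp hb0 hs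
  have hc : 0 < ‖1 + I * δ‖ := norm_pos_iff.2 fun h ↦ by simpa using congrArg re h
  refine ⟨fun K _ ↦ ?_, ?_⟩
  · obtain ⟨m, hm, hlow⟩ := eventually_norm_phiA_ge (δ := δ) (κ := κ) (a := a) hp hb0 K
    obtain ⟨C, hC, hR⟩ := exists_norm_nonlinRem_le_sq hp hm hM
    obtain ⟨s₀, hs₀⟩ := eventually_atTop.1 (hlow.and (eventually_ge_atTop 1))
    refine ⟨_, mul_pos hc hC, max s₀ 1, le_max_right _ _, fun s hs y hy q hq ↦ ?_⟩
    obtain ⟨hlow, hs1⟩ := hs₀ s (le_of_max_le_left hs)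
    rw [Bq_eq_mul_nonlinRem, norm_mul, mul_assoc]
    exact mul_le_mul_of_nonneg_left (hR _ _ (hlow y hy) (hφ s hs1 y) hq) (norm_nonneg _)
  · obtain ⟨C, hC, hR⟩ := exists_norm_nonlinRem_le_rpow_min hp hM
    refine ⟨_, mul_pos hc hC, 1, le_rfl, fun s hs y _ q hq ↦ ?_⟩
    rw [Bq_eq_mul_nonlinRem, norm_mul, mul_assoc]
    exact mul_le_mul_of_nonneg_left (hR _ _ (hφ s hs y) hq) (norm_nonneg _)

/-- `|B(q,y,s)| ≤ C(K)|q|²` in the inner region `|y| ≤ 2K s^{1/4}`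
(for `|q| ≤ 1` and `s` large), and `|B(q,y,s)| ≤ C|q|^{min(p,2)}` in the outer region
`|y| ≥ s^{1/4}`. -/
theorem stmt8 (p δ κ b a : ℝ) (hp : 1 < p) (hδ : δ = Real.sqrt p)
    (hκ : κ = (p - 1) ^ (-(1 : ℝ) / (p - 1)))
    (hb : b = (p - 1) ^ 2 / (8 * Real.sqrt (p * (p + 1))))
    (ha : a = κ / (4 * Real.sqrt (p * (p + 1)))) :
    (∀ K : ℝ, 1 ≤ K → ∃ C : ℝ, 0 < C ∧ ∃ s₀ : ℝ, 1 ≤ s₀ ∧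
      ∀ s : ℝ, s₀ ≤ s → ∀ y : ℝ, |y| ≤ 2 * K * s ^ ((1 : ℝ) / 4) →
        ∀ q : ℂ, ‖q‖ ≤ 1 →
          ‖Bq p δ κ b a q y s‖ ≤ C * ‖q‖ ^ 2) ∧
    (∃ C : ℝ, 0 < C ∧ ∃ s₁ : ℝ, 1 ≤ s₁ ∧
      ∀ s : ℝ, s₁ ≤ s → ∀ y : ℝ, s ^ ((1 : ℝ) / 4) ≤ |y| →
        ∀ q : ℂ, ‖q‖ ≤ 1 →
          ‖Bq p δ κ b a q y s‖ ≤ C * ‖q‖ ^ (min p 2)) :=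
  stmt8_general p δ κ b a hp hb
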